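/- arXiv:2402.02638 — 3 statements merged into one kernel-verified Lean document; each statement's English description precedes it below -/
import Mathlib

section
/- Let 0 < β ≤ 1, ν > 0, μ ∈ ℂ, k ∈ ℕ, and let J^β denote the Riemann-Liouville fractional integral (J^β f)(t) = (1/Γ(β)) ∫_0^t (t-τ)^{β-1} f(τ) dτ, with I the identity. Then (I - μ J^β)^k applied to t ↦ (t^{kβ+ν-1}/k!) E_{β,ν}^{(k)}(μ t^β) equals J^{kβ} applied to t ↦ t^{ν-1} E_{β,ν}(μ t^β). -/
open MeasureTheory Filter Set

/-- Two-parameter Mittag-Leffler function `E_{β,ν}(z) = Σ zⁿ/Γ(βn+ν)`. -/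
noncomputable def ML (β ν : ℝ) (z : ℂ) : ℂ :=
  ∑' n : ℕ, z ^ n / Complex.Gamma ((β * n + ν : ℝ) : ℂ)

/-- Riemann-Liouville fractional integral of order `γ`. -/
noncomputable def frInt (γ : ℝ) (f : ℝ → ℂ) (t : ℝ) : ℂ :=
  (Real.Gamma γ : ℂ)⁻¹ * ∫ τ in (0:ℝ)..t, (((t - τ) ^ (γ - 1) : ℝ) : ℂ) * f τ

/-- Fractional integral with the convention `J⁰ = I`. -/
noncomputable def frInt' (γ : ℝ) (f : ℝ → ℂ) : ℝ → ℂ :=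
  if γ = 0 then f else frInt γ f

/-- Laplace transform. -/
noncomputable def laplace (f : ℝ → ℂ) (s : ℝ) : ℂ :=
  ∫ t in Set.Ioi (0:ℝ), Complex.exp (-(s * t)) * f t

/-! Put `f_A(t) = Σ aₙ t^(βn+ν-1) / Γ(βn+ν)` for a power series `A = Σ aₙ Xⁿ` with
geometrically bounded coefficients. The Beta integral gives
`J^γ f_A = Σ aₙ t^(βn+ν+γ-1) / Γ(βn+ν+γ)`; in particular `J^β f_A = f_(X A)`, so `I - μ J^β`
acts on `f_A` as multiplication of `A` by `1 - μX`. Differentiating the Mittag-Leffler series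
termwise shows that the function on the left is `f_A` for `A = X^k / (1 - μX)^(k+1)`. Hence
`(I - μ J^β)^k` turns it into `f_(X^k / (1 - μX)) = J^(kβ) f_(1 / (1 - μX))`, and
`f_(1 / (1 - μX))(t) = t^(ν-1) E_{β,ν}(μ t^β)`. -/

open scoped Nat
open PowerSeries

lemma eventually_pow_floor_le_Gamma_add_one (q : ℝ) :
    ∀ᶠ x : ℝ in atTop, q ^ ⌊x⌋₊ ≤ Real.Gamma (x + 1) := by
  have hfact : ∀ᶠ m : ℕ in atTop, q ^ m ≤ m ! := by
    filter_upwards [(FloorSemiring.tendsto_pow_div_factorial_atTop q).eventually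
      (gt_mem_nhds one_pos)] with m hm
    exact ((div_lt_one (by positivity)).mp hm).le
  filter_upwards [tendsto_nat_floor_atTop.eventually hfact, eventually_ge_atTop 1] with x hq hx
  have h1 : (1 : ℝ) ≤ ⌊x⌋₊ := by exact_mod_cast Nat.le_floor (by simpa using hx)
  have hfloor : (⌊x⌋₊ : ℝ) ≤ x := Nat.floor_le (zero_le_one.trans hx)
  calc q ^ ⌊x⌋₊ ≤ (⌊x⌋₊ ! : ℝ) := hq
    _ = Real.Gamma (⌊x⌋₊ + 1) := (Real.Gamma_nat_eq_factorial _).symm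
    _ ≤ Real.Gamma (x + 1) := Real.Gamma_strictMonoOn_Ici.monotoneOn
        (show (2 : ℝ) ≤ ⌊x⌋₊ + 1 by linarith) (show (2 : ℝ) ≤ x + 1 by linarith) (by linarith)

lemma eventually_pow_le_Gamma_mul_add {β : ℝ} (hβ : 0 < β) (c R : ℝ) :
    ∀ᶠ n : ℕ in atTop, R ^ n ≤ Real.Gamma (β * n + c) := by
  obtain ⟨p, hp⟩ := exists_nat_ge (2 / β)
  have hpβ : 2 ≤ p * β := by rwa [div_le_iff₀ hβ] at hp
  set S := max |R| 1
  have hx : Tendsto (fun n : ℕ => β * n + c - 1) atTop atTop :=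
    tendsto_atTop_add_const_right _ _
      (tendsto_atTop_add_const_right _ _ (tendsto_natCast_atTop_atTop.const_mul_atTop hβ))
  filter_upwards [hx.eventually (eventually_pow_floor_le_Gamma_add_one (S ^ p)),
    tendsto_natCast_atTop_atTop.eventually_ge_atTop (p * (2 - c))] with n hΓ hn
  have hnp : n ≤ p * ⌊β * n + c - 1⌋₊ := by
    have := Nat.lt_floor_add_one (β * n + c - 1)
    have : (n : ℝ) ≤ p * ⌊β * n + c - 1⌋₊ := by nlinarith
    exact_mod_cast this
  calc R ^ n ≤ |R| ^ n := (le_abs_self _).trans (abs_pow R n).le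
    _ ≤ S ^ n := pow_le_pow_left₀ (abs_nonneg R) (le_max_left _ _) n
    _ ≤ S ^ (p * ⌊β * n + c - 1⌋₊) := pow_le_pow_right₀ (le_max_right _ _) hnp
    _ = (S ^ p) ^ ⌊β * n + c - 1⌋₊ := pow_mul S p _
    _ ≤ Real.Gamma (β * n + c) := by simpa using hΓ

lemma summable_pow_div_Gamma_mul_add {β : ℝ} (hβ : 0 < β) (r c : ℝ) :
    Summable fun n : ℕ => r ^ n / Real.Gamma (β * n + c) := by
  refine Summable.of_norm_bounded_eventually_nat summable_geometric_two ?_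
  filter_upwards [eventually_pow_le_Gamma_mul_add hβ c (2 * |r|)] with n hn
  have hΓ : 0 ≤ Real.Gamma (β * n + c) := (by positivity : (0:ℝ) ≤ (2 * |r|) ^ n).trans hn
  rw [norm_div, norm_pow, Real.norm_eq_abs, Real.norm_eq_abs, abs_of_nonneg hΓ]
  refine div_le_of_le_mul₀ hΓ (by positivity) ?_
  calc |r| ^ n = (1 / 2) ^ n * (2 * |r|) ^ n := by rw [← mul_pow]; ring
    _ ≤ (1 / 2) ^ n * Real.Gamma (β * n + c) := by gcongr

lemma integral_sub_rpow_mul_rpow {b c t : ℝ} (hb : 0 < b) (hc : 0 < c) (ht : 0 < t) :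
    ∫ τ in (0:ℝ)..t, (t - τ) ^ (b - 1) * τ ^ (c - 1)
      = Real.Gamma b * Real.Gamma c / Real.Gamma (b + c) * t ^ (b + c - 1) := by
  apply Complex.ofReal_injective
  have hcongr : EqOn (fun τ : ℝ => (((t - τ) ^ (b - 1) * τ ^ (c - 1) : ℝ) : ℂ))
      (fun τ : ℝ => (τ : ℂ) ^ ((c : ℂ) - 1) * ((t : ℂ) - τ) ^ ((b : ℂ) - 1)) (uIcc 0 t) := by
    intro τ hτ
    rw [uIcc_of_le ht.le] at hτ
    simp only
    rw [Complex.ofReal_mul, Complex.ofReal_cpow (sub_nonneg.mpr hτ.2),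
      Complex.ofReal_cpow hτ.1]
    push_cast
    ring
  rw [← intervalIntegral.integral_ofReal, intervalIntegral.integral_congr hcongr,
    Complex.betaIntegral_scaled _ _ ht,
    Complex.betaIntegral_eq_Gamma_mul_div _ _ (by simpa using hc) (by simpa using hb),
    ← Complex.ofReal_add, Complex.Gamma_ofReal, Complex.Gamma_ofReal, Complex.Gamma_ofReal,
    show ((c + b : ℝ) : ℂ) - 1 = ((b + c - 1 : ℝ) : ℂ) by push_cast; ring,
    ← Complex.ofReal_cpow ht.le, add_comm c b]
  push_cast
  ring

lemma intervalIntegrable_sub_rpow_mul_rpow {b c t : ℝ} (hb : 0 < b) (hc : 0 < c) (ht : 0 < t) :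
    IntervalIntegrable (fun τ => (t - τ) ^ (b - 1) * τ ^ (c - 1)) volume 0 t := by
  refine intervalIntegral.intervalIntegrable_of_integral_ne_zero ?_
  rw [integral_sub_rpow_mul_rpow hb hc ht]
  have := Real.Gamma_pos_of_pos hb
  have := Real.Gamma_pos_of_pos hc
  have := Real.Gamma_pos_of_pos (add_pos hb hc)
  positivity

noncomputable def powDivGamma (c t : ℝ) : ℝ := t ^ (c - 1) / Real.Gamma c

lemma powDivGamma_nonneg {c t : ℝ} (hc : 0 < c) (ht : 0 ≤ t) : 0 ≤ powDivGamma c t :=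
  div_nonneg (Real.rpow_nonneg ht _) (Real.Gamma_pos_of_pos hc).le

lemma integral_sub_rpow_mul_powDivGamma {γ c t : ℝ} (hγ : 0 < γ) (hc : 0 < c) (ht : 0 < t) :
    ∫ τ in (0:ℝ)..t, (t - τ) ^ (γ - 1) * powDivGamma c τ
      = Real.Gamma γ * powDivGamma (c + γ) t := by
  have := Real.Gamma_pos_of_pos hc
  have := Real.Gamma_pos_of_pos (add_pos hc hγ)
  simp only [powDivGamma, mul_div_assoc']
  rw [intervalIntegral.integral_div, integral_sub_rpow_mul_rpow hγ hc ht, add_comm γ c]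
  field_simp

lemma intervalIntegrable_sub_rpow_mul_powDivGamma {γ c t : ℝ} (hγ : 0 < γ) (hc : 0 < c)
    (ht : 0 < t) :
    IntervalIntegrable (fun τ => (t - τ) ^ (γ - 1) * powDivGamma c τ) volume 0 t := by
  simpa only [powDivGamma, mul_div_assoc'] using
    (intervalIntegrable_sub_rpow_mul_rpow hγ hc ht).div_const (Real.Gamma c)

lemma frInt_tsum_mul_powDivGamma {γ t : ℝ} (hγ : 0 < γ) (ht : 0 < t) {a : ℕ → ℂ} {c : ℕ → ℝ}
    (hc : ∀ n, 0 < c n) (hs : Summable fun n => ‖a n‖ * powDivGamma (c n + γ) t) :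
    frInt γ (fun τ => ∑' n, a n * powDivGamma (c n) τ) t
      = ∑' n, a n * powDivGamma (c n + γ) t := by
  set F : ℕ → ℝ → ℂ := fun n τ => a n * ((t - τ) ^ (γ - 1) * powDivGamma (c n) τ : ℝ)
  have hF : ∀ n, IntegrableOn (F n) (Ioc 0 t) :=
    fun n => ((intervalIntegrable_iff_integrableOn_Ioc_of_le ht.le).mp
      (intervalIntegrable_sub_rpow_mul_powDivGamma hγ (hc n) ht)).ofReal.const_mul (a n)
  have hF_norm : ∀ n, ∫ τ in Ioc 0 t, ‖F n τ‖
      = ‖a n‖ * (Real.Gamma γ * powDivGamma (c n + γ) t) := by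
    intro n
    rw [← integral_sub_rpow_mul_powDivGamma hγ (hc n) ht, intervalIntegral.integral_of_le ht.le,
      ← integral_const_mul]
    refine setIntegral_congr_fun measurableSet_Ioc fun τ hτ => ?_
    have : 0 ≤ t - τ := sub_nonneg.mpr hτ.2
    rw [norm_mul, Complex.norm_real, Real.norm_of_nonneg
      (mul_nonneg (Real.rpow_nonneg this _) (powDivGamma_nonneg (hc n) hτ.1.le))]
  have hF_int : ∀ n, ∫ τ in Ioc 0 t, F n τ
      = a n * (Real.Gamma γ * powDivGamma (c n + γ) t : ℝ) := by
    intro n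
    rw [integral_const_mul, integral_complex_ofReal, ← intervalIntegral.integral_of_le ht.le,
      integral_sub_rpow_mul_powDivGamma hγ (hc n) ht]
  have hΓ : (Real.Gamma γ : ℂ) ≠ 0 := Complex.ofReal_ne_zero.mpr (Real.Gamma_pos_of_pos hγ).ne'
  calc frInt γ (fun τ => ∑' n, a n * powDivGamma (c n) τ) t
      = (Real.Gamma γ : ℂ)⁻¹ * ∫ τ in Ioc 0 t, ∑' n, F n τ := by
        rw [frInt, intervalIntegral.integral_of_le ht.le]
        congr 1
        refine setIntegral_congr_fun measurableSet_Ioc fun τ _ => ?_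
        simp only [F, ← tsum_mul_left, Complex.ofReal_mul]
        ring_nf
    _ = (Real.Gamma γ : ℂ)⁻¹ * ∑' n, ∫ τ in Ioc 0 t, F n τ := by
        rw [integral_tsum_of_summable_integral_norm hF]
        simpa only [hF_norm, mul_left_comm _ (Real.Gamma γ)] using hs.mul_left (Real.Gamma γ)
    _ = ∑' n, a n * powDivGamma (c n + γ) t := by
        simp only [hF_int, ← tsum_mul_left]
        congr 1 with n
        push_cast
        field_simp

lemma descFactorial_mul_pow_sub_le (n j : ℕ) {x : ℝ} (hx : 0 ≤ x) :
    n.descFactorial j * x ^ (n - j) ≤ (2 ^ j * (x + 1)) ^ n := by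
  have hdesc : (n.descFactorial j : ℝ) ≤ (2 ^ j) ^ n := by
    rw [← pow_mul, mul_comm, pow_mul]
    exact_mod_cast (Nat.descFactorial_le_pow n j).trans
      (Nat.pow_le_pow_left Nat.lt_two_pow_self.le j)
  have hpow : x ^ (n - j) ≤ (x + 1) ^ n :=
    (pow_le_pow_left₀ hx (by linarith) _).trans
      (pow_le_pow_right₀ (by linarith) (Nat.sub_le n j))
  rw [mul_pow]
  gcongr

lemma iteratedDeriv_const_mul_pow (c : ℂ) (n j : ℕ) :
    iteratedDeriv j (fun z => c * z ^ n) = fun z => c * n.descFactorial j * z ^ (n - j) := by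
  ext z
  rw [iteratedDeriv_const_mul_field, iteratedDeriv_pow, mul_assoc]

lemma summableLocallyUniformlyOn_iteratedDeriv_mul_pow {c : ℕ → ℂ}
    (hc : ∀ R : ℝ, Summable fun n => ‖c n‖ * R ^ n) (j : ℕ) :
    SummableLocallyUniformlyOn (fun n => iteratedDeriv j (fun z => c n * z ^ n)) univ := by
  simp only [iteratedDeriv_const_mul_pow]
  refine SummableLocallyUniformlyOn_of_locally_bounded isOpen_univ fun K _ hK => ?_
  obtain ⟨R, hR⟩ := hK.isBounded.exists_norm_le
  refine ⟨fun n => ‖c n‖ * (2 ^ j * (max R 0 + 1)) ^ n, hc _, fun n w hw => ?_⟩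
  dsimp only
  rw [norm_mul, norm_mul, Complex.norm_natCast, norm_pow, mul_assoc]
  refine mul_le_mul_of_nonneg_left ?_ (norm_nonneg _)
  calc (n.descFactorial j : ℝ) * ‖w‖ ^ (n - j)
      ≤ n.descFactorial j * max R 0 ^ (n - j) :=
        mul_le_mul_of_nonneg_left (pow_le_pow_left₀ (norm_nonneg w)
          ((hR w hw).trans (le_max_left R 0)) _) (Nat.cast_nonneg _)
    _ ≤ (2 ^ j * (max R 0 + 1)) ^ n := descFactorial_mul_pow_sub_le n j (le_max_right R 0)

lemma iteratedDeriv_tsum_mul_pow {c : ℕ → ℂ} (hc : ∀ R : ℝ, Summable fun n => ‖c n‖ * R ^ n)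
    (k : ℕ) (z : ℂ) :
    iteratedDeriv k (fun z => ∑' n, c n * z ^ n) z
      = ∑' n, c n * n.descFactorial k * z ^ (n - k) := by
  have hsum (w : ℂ) : Summable fun n => c n * w ^ n :=
    .of_norm (by simpa only [norm_mul, norm_pow] using hc ‖w‖)
  rw [← iteratedDerivWithin_univ, iteratedDerivWithin_tsum k isOpen_univ (mem_univ z)
    (fun w _ => hsum w)
    (fun j _ _ => by
      simpa only [iteratedDerivWithin_univ] using
        summableLocallyUniformlyOn_iteratedDeriv_mul_pow hc j)
    (fun n j w _ _ => by rw [iteratedDerivWithin_univ, iteratedDeriv_const_mul_pow]; fun_prop)]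
  simp only [iteratedDerivWithin_univ, iteratedDeriv_const_mul_pow]

lemma iteratedDeriv_ML {β : ℝ} (hβ : 0 < β) (ν : ℝ) (k : ℕ) (z : ℂ) :
    iteratedDeriv k (ML β ν) z
      = ∑' n : ℕ, (Real.Gamma (β * n + ν) : ℂ)⁻¹ * n.descFactorial k * z ^ (n - k) := by
  have hML : ML β ν = fun z => ∑' n : ℕ, (Real.Gamma (β * n + ν) : ℂ)⁻¹ * z ^ n := by
    ext z
    simp only [ML, Complex.Gamma_ofReal, div_eq_inv_mul]
  rw [hML]
  refine iteratedDeriv_tsum_mul_pow (fun R => ?_) k z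
  refine .of_norm_bounded (summable_pow_div_Gamma_mul_add hβ R ν).norm fun n => le_of_eq ?_
  simp [norm_mul, div_eq_inv_mul]

def GeomBounded (A : ℂ⟦X⟧) : Prop :=
  ∃ C r : ℝ, 0 ≤ C ∧ 1 ≤ r ∧ ∀ n, ‖coeff n A‖ ≤ C * r ^ n

lemma GeomBounded.X_mul {A : ℂ⟦X⟧} (hA : GeomBounded A) : GeomBounded (X * A) := by
  obtain ⟨C, r, hC, hr, hA⟩ := hA
  refine ⟨C, r, hC, hr, fun n => ?_⟩
  cases n with
  | zero => simpa using hC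
  | succ n =>
    rw [coeff_succ_X_mul]
    exact (hA n).trans (by gcongr; exact n.le_succ)

lemma GeomBounded.sub_C_mul {A B : ℂ⟦X⟧} (hA : GeomBounded A) (hB : GeomBounded B) (μ : ℂ) :
    GeomBounded (A - C μ * B) := by
  obtain ⟨C₁, r₁, hC₁, hr₁, hA⟩ := hA
  obtain ⟨C₂, r₂, hC₂, hr₂, hB⟩ := hB
  refine ⟨C₁ + ‖μ‖ * C₂, max r₁ r₂, by positivity, hr₁.trans (le_max_left _ _), fun n => ?_⟩
  have h₁ : r₁ ^ n ≤ max r₁ r₂ ^ n := pow_le_pow_left₀ (by linarith) (le_max_left _ _) n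
  have h₂ : r₂ ^ n ≤ max r₁ r₂ ^ n := pow_le_pow_left₀ (by linarith) (le_max_right _ _) n
  rw [map_sub, coeff_C_mul]
  calc ‖coeff n A - μ * coeff n B‖ ≤ ‖coeff n A‖ + ‖μ‖ * ‖coeff n B‖ :=
        (norm_sub_le _ _).trans_eq (by rw [norm_mul])
    _ ≤ C₁ * r₁ ^ n + ‖μ‖ * (C₂ * r₂ ^ n) :=
        add_le_add (hA n) (mul_le_mul_of_nonneg_left (hB n) (norm_nonneg μ))
    _ ≤ C₁ * max r₁ r₂ ^ n + ‖μ‖ * (C₂ * max r₁ r₂ ^ n) := by gcongr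
    _ = (C₁ + ‖μ‖ * C₂) * max r₁ r₂ ^ n := by ring

lemma GeomBounded.one_sub_C_mul_X_mul {A : ℂ⟦X⟧} (hA : GeomBounded A) (μ : ℂ) :
    GeomBounded ((1 - C μ * X) * A) := by
  rw [sub_mul, one_mul, mul_assoc]
  exact hA.sub_C_mul hA.X_mul μ

noncomputable def gammaSeries (β ν : ℝ) (A : ℂ⟦X⟧) (t : ℝ) : ℂ :=
  ∑' n, coeff n A * powDivGamma (β * n + ν) t

lemma summable_norm_coeff_mul_powDivGamma {β c t : ℝ} (hβ : 0 < β) (hc : 0 < c) (ht : 0 < t)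
    {A : ℂ⟦X⟧} (hA : GeomBounded A) :
    Summable fun n => ‖coeff n A‖ * powDivGamma (β * n + c) t := by
  obtain ⟨C, r, hC, hr, hA⟩ := hA
  have hpow (n : ℕ) : t ^ (β * n + c - 1) = t ^ (c - 1) * (t ^ β) ^ n := by
    rw [← Real.rpow_natCast, ← Real.rpow_mul ht.le, ← Real.rpow_add ht]
    ring_nf
  refine .of_nonneg_of_le (fun n => mul_nonneg (norm_nonneg _)
    (powDivGamma_nonneg (by positivity) ht.le)) (fun n => ?_)
    ((summable_pow_div_Gamma_mul_add hβ (r * t ^ β) c).mul_left (C * t ^ (c - 1)))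
  calc ‖coeff n A‖ * powDivGamma (β * n + c) t
      ≤ C * r ^ n * powDivGamma (β * n + c) t :=
        mul_le_mul_of_nonneg_right (hA n) (powDivGamma_nonneg (by positivity) ht.le)
    _ = C * t ^ (c - 1) * ((r * t ^ β) ^ n / Real.Gamma (β * n + c)) := by
        rw [powDivGamma, hpow, mul_pow]
        ring

lemma summable_gammaSeries {β ν t : ℝ} (hβ : 0 < β) (hν : 0 < ν) (ht : 0 < t) {A : ℂ⟦X⟧}
    (hA : GeomBounded A) :
    Summable fun n => coeff n A * (powDivGamma (β * n + ν) t : ℂ) := by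
  refine .of_norm ((summable_norm_coeff_mul_powDivGamma hβ hν ht hA).congr fun n => ?_)
  rw [norm_mul, Complex.norm_real, Real.norm_of_nonneg (powDivGamma_nonneg (by positivity) ht.le)]

lemma frInt_gammaSeries {β ν γ t : ℝ} (hβ : 0 < β) (hν : 0 < ν) (hγ : 0 < γ) (ht : 0 < t)
    {A : ℂ⟦X⟧} (hA : GeomBounded A) :
    frInt γ (gammaSeries β ν A) t = gammaSeries β (ν + γ) A t := by
  have := frInt_tsum_mul_powDivGamma hγ ht (c := fun n => β * n + ν) (fun n => by positivity)
    (by simpa only [add_assoc] using summable_norm_coeff_mul_powDivGamma hβ (add_pos hν hγ) ht hA)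
  simp only [add_assoc] at this
  exact this

lemma gammaSeries_X_pow_mul (β ν : ℝ) (k : ℕ) (A : ℂ⟦X⟧) (t : ℝ) :
    gammaSeries β ν (X ^ k * A) t = gammaSeries β (ν + k * β) A t := by
  rw [gammaSeries, ← (add_left_injective k).tsum_eq]
  · congr 1 with n
    rw [coeff_X_pow_mul]
    push_cast
    ring_nf
  · intro n hn
    have : k ≤ n := by
      by_contra h
      simp [coeff_X_pow_mul', h] at hn
    exact ⟨n - k, Nat.sub_add_cancel this⟩

lemma gammaSeries_one_sub_C_mul_X_mul {β ν t : ℝ} (hβ : 0 < β) (hν : 0 < ν) (ht : 0 < t)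
    {A : ℂ⟦X⟧} (hA : GeomBounded A) (μ : ℂ) :
    gammaSeries β ν ((1 - C μ * X) * A) t
      = gammaSeries β ν A t - μ * gammaSeries β (ν + β) A t := by
  have h := gammaSeries_X_pow_mul β ν 1 A t
  rw [pow_one, Nat.cast_one, one_mul] at h
  rw [← h, gammaSeries, gammaSeries, gammaSeries, ← tsum_mul_left,
    ← (summable_gammaSeries hβ hν ht hA).tsum_sub
      ((summable_gammaSeries hβ hν ht hA.X_mul).mul_left μ)]
  congr 1 with n
  rw [sub_mul, one_mul, mul_assoc, map_sub, coeff_C_mul]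
  ring

lemma frInt_congr {γ t : ℝ} {f g : ℝ → ℂ} (h : EqOn f g (Ioi 0)) (ht : 0 ≤ t) :
    frInt γ f t = frInt γ g t := by
  rw [frInt, frInt, intervalIntegral.integral_of_le ht, intervalIntegral.integral_of_le ht]
  congr 1
  exact setIntegral_congr_fun measurableSet_Ioc fun τ hτ => by rw [h hτ.1]

lemma eqOn_iterate_gammaSeries {β ν : ℝ} (hβ : 0 < β) (hν : 0 < ν) (μ : ℂ) (k : ℕ)
    {A : ℂ⟦X⟧} (hA : GeomBounded A) {f : ℝ → ℂ} (hf : EqOn f (gammaSeries β ν A) (Ioi 0)) :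
    EqOn ((fun g : ℝ → ℂ => fun x => g x - μ * frInt β g x)^[k] f)
      (gammaSeries β ν ((1 - C μ * X) ^ k * A)) (Ioi 0) := by
  induction k generalizing A f with
  | zero => simpa using hf
  | succ k ih =>
    have hstep : EqOn (fun x => f x - μ * frInt β f x)
        (gammaSeries β ν ((1 - C μ * X) * A)) (Ioi 0) := fun x hx => by
      dsimp only
      rw [hf hx, frInt_congr hf (le_of_lt hx), frInt_gammaSeries hβ hν hβ hx hA,
        gammaSeries_one_sub_C_mul_X_mul hβ hν hx hA]
    rw [Function.iterate_succ_apply, pow_succ, mul_assoc]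
    exact ih (hA.one_sub_C_mul_X_mul μ) hstep

lemma frInt'_gammaSeries {β ν γ t : ℝ} (hβ : 0 < β) (hν : 0 < ν) (hγ : 0 ≤ γ) (ht : 0 < t)
    {A : ℂ⟦X⟧} (hA : GeomBounded A) {f : ℝ → ℂ} (hf : EqOn f (gammaSeries β ν A) (Ioi 0)) :
    frInt' γ f t = gammaSeries β (ν + γ) A t := by
  rw [frInt']
  split_ifs with h
  · rw [h, add_zero, hf ht]
  · rw [frInt_congr hf ht.le, frInt_gammaSeries hβ hν (lt_of_le_of_ne hγ (Ne.symm h)) ht hA]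

/-- The expansion of `X ^ k / (1 - μ X) ^ (k + 1)`. -/
noncomputable def binomSeries (μ : ℂ) (k : ℕ) : ℂ⟦X⟧ :=
  mk fun n => n.choose k * μ ^ (n - k)

lemma geomBounded_binomSeries (μ : ℂ) (k : ℕ) : GeomBounded (binomSeries μ k) := by
  refine ⟨1, 2 * (1 + ‖μ‖), zero_le_one, by linarith [norm_nonneg μ], fun n => ?_⟩
  rw [binomSeries, coeff_mk, norm_mul, norm_pow, Complex.norm_natCast, one_mul, mul_pow]
  gcongr
  · exact_mod_cast Nat.choose_le_two_pow n k
  · exact (pow_le_pow_left₀ (norm_nonneg μ) (by linarith) _).trans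
      (pow_le_pow_right₀ (by linarith [norm_nonneg μ]) (Nat.sub_le n k))

lemma one_sub_C_mul_X_mul_binomSeries_succ (μ : ℂ) (k : ℕ) :
    (1 - C μ * X) * binomSeries μ (k + 1) = X * binomSeries μ k := by
  ext (_ | n)
  · simp [binomSeries]
  · rw [sub_mul, one_mul, mul_assoc, map_sub, coeff_C_mul, coeff_succ_X_mul, coeff_succ_X_mul]
    simp only [binomSeries, coeff_mk, Nat.choose_succ_succ', Nat.cast_add, Nat.succ_sub_succ]
    rcases lt_or_ge n (k + 1) with h | h
    · simp [Nat.choose_eq_zero_of_lt h]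
    · rw [show n - k = n - (k + 1) + 1 by omega, pow_succ]
      ring

lemma one_sub_C_mul_X_pow_mul_binomSeries (μ : ℂ) (k : ℕ) :
    (1 - C μ * X) ^ k * binomSeries μ k = X ^ k * binomSeries μ 0 := by
  induction k with
  | zero => simp
  | succ k ih =>
    calc (1 - C μ * X) ^ (k + 1) * binomSeries μ (k + 1)
        = (1 - C μ * X) ^ k * ((1 - C μ * X) * binomSeries μ (k + 1)) := by ring
      _ = X ^ (k + 1) * binomSeries μ 0 := by
        rw [one_sub_C_mul_X_mul_binomSeries_succ, mul_left_comm, ih, pow_succ']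
        ring

lemma eqOn_gammaSeries_binomSeries {β ν : ℝ} (hβ : 0 < β) (μ : ℂ) (k : ℕ) :
    EqOn (fun x : ℝ => (((x ^ ((k : ℝ) * β + ν - 1) : ℝ) : ℂ) / (k.factorial : ℂ)) *
        iteratedDeriv k (ML β ν) (μ * ((x ^ β : ℝ) : ℂ)))
      (gammaSeries β ν (binomSeries μ k)) (Ioi 0) := by
  intro x (hx : 0 < x)
  dsimp only
  rw [iteratedDeriv_ML hβ, gammaSeries, ← tsum_mul_left]
  congr 1 with n
  rw [binomSeries, coeff_mk, powDivGamma]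
  rcases lt_or_ge n k with h | h
  · simp [Nat.descFactorial_eq_zero_iff_lt.mpr h, Nat.choose_eq_zero_of_lt h]
  · obtain ⟨m, rfl⟩ := Nat.exists_eq_add_of_le h
    have hpow : x ^ ((k : ℝ) * β + ν - 1) * (x ^ β) ^ m = x ^ (β * ((k + m : ℕ) : ℝ) + ν - 1) := by
      rw [← Real.rpow_natCast, ← Real.rpow_mul hx.le, ← Real.rpow_add hx]
      push_cast
      ring_nf
    have hfact : (k.factorial : ℂ) ≠ 0 := Nat.cast_ne_zero.mpr k.factorial_ne_zero
    rw [Nat.add_sub_cancel_left, Nat.descFactorial_eq_factorial_mul_choose, mul_pow, ← hpow]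
    push_cast
    field_simp

theorem lemma_1a_general (β ν : ℝ) (hβ0 : 0 < β) (hν : 0 < ν) (μ : ℂ)
    (k : ℕ) (t : ℝ) (ht : 0 < t) :
    ((fun g : ℝ → ℂ => fun x => g x - μ * frInt β g x)^[k]
        (fun x : ℝ =>
          (((x ^ ((k : ℝ) * β + ν - 1) : ℝ) : ℂ) / (k.factorial : ℂ)) *
            iteratedDeriv k (ML β ν) (μ * ((x ^ β : ℝ) : ℂ)))) t
      = frInt' ((k : ℝ) * β)
          (fun x : ℝ => ((x ^ (ν - 1) : ℝ) : ℂ) * ML β ν (μ * ((x ^ β : ℝ) : ℂ))) t := by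
  have hrhs : EqOn (fun x : ℝ => ((x ^ (ν - 1) : ℝ) : ℂ) * ML β ν (μ * ((x ^ β : ℝ) : ℂ)))
      (gammaSeries β ν (binomSeries μ 0)) (Ioi 0) := by
    simpa using eqOn_gammaSeries_binomSeries hβ0 μ 0
  rw [eqOn_iterate_gammaSeries hβ0 hν μ k (geomBounded_binomSeries μ k)
      (eqOn_gammaSeries_binomSeries hβ0 μ k) ht,
    one_sub_C_mul_X_pow_mul_binomSeries, gammaSeries_X_pow_mul,
    frInt'_gammaSeries hβ0 hν (by positivity) ht (geomBounded_binomSeries μ 0) hrhs]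

theorem lemma_1a (β ν : ℝ) (hβ0 : 0 < β) (hβ1 : β ≤ 1) (hν : 0 < ν) (μ : ℂ)
    (k : ℕ) (t : ℝ) (ht : 0 < t) :
    ((fun g : ℝ → ℂ => fun x => g x - μ * frInt β g x)^[k]
        (fun x : ℝ =>
          (((x ^ ((k : ℝ) * β + ν - 1) : ℝ) : ℂ) / (k.factorial : ℂ)) *
            iteratedDeriv k (ML β ν) (μ * ((x ^ β : ℝ) : ℂ)))) t
      = frInt' ((k : ℝ) * β)
          (fun x : ℝ => ((x ^ (ν - 1) : ℝ) : ℂ) * ML β ν (μ * ((x ^ β : ℝ) : ℂ))) t :=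
  lemma_1a_general β ν hβ0 hν μ k t ht
end

section
/- Let β₁, β₂ > 0, ν > 0, μ₁, μ₂ ∈ ℂ. The convolution u(t) = ∫_0^t τ^{ν-1}E_{β₁,ν}(μ₁τ^{β₁}) · (t−τ)^{β₂−1} E_{β₂,β₂}(μ₂(t−τ)^{β₂}) dτ satisfies (I − μ₂ J^{β₂}) u = J^{β₂}[t^{ν−1}E_{β₁,ν}(μ₁ t^{β₁})]. -/
/-!
Write `k_p(t) = t^(p-1)/Γ(p)`. Both Mittag-Leffler factors are series of such kernels,
`t^(ν-1) E_{β,ν}(μ t^β) = Σ μⁿ k_{βn+ν}(t)`, and `k_p ∗ k_q = k_{p+q}` is the Beta integral, so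
`u = Σ_{m,n} μ₁^m μ₂^n k_{β₁m+ν+β₂(n+1)}`. Since `J^{β₂} = k_{β₂} ∗ ·` shifts `n ↦ n+1`, the
difference `u - μ₂ J^{β₂} u` telescopes to the terms with `n = 0`, which are
`Σ μ₁^m k_{β₁m+ν+β₂} = J^{β₂}[t^(ν-1) E_{β₁,ν}(μ₁ t^β₁)]`. Termwise integration is justified by
absolute convergence, which rests on `Γ(x+β) ≥ (x-1)^β Γ(x)` and on the antitonicity of
`B(p,q) = Γ(p)Γ(q)/Γ(p+q)` in each argument.
-/

open MeasureTheory Filter Set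

-- Compare the slopes of the convex function `log ∘ Γ` over `[x-1, x]` and `[x, x+β]`.
theorem Real.rpow_mul_Gamma_le_Gamma_add {x β : ℝ} (hx : 1 < x) (hβ : 0 < β) :
    (x - 1) ^ β * Real.Gamma x ≤ Real.Gamma (x + β) := by
  have hΓ : Real.Gamma x = (x - 1) * Real.Gamma (x - 1) := by
    rw [← Real.Gamma_add_one (by linarith), sub_add_cancel]
  have hslope := Real.convexOn_log_Gamma.slope_mono_adjacent (x := x - 1) (y := x) (z := x + β)
    (by simp; linarith) (by simp; linarith) (by linarith) (by linarith)
  have hstep : Real.log (Real.Gamma x) - Real.log (Real.Gamma (x - 1)) = Real.log (x - 1) := by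
    rw [hΓ, Real.log_mul (by linarith) (Real.Gamma_pos_of_pos (by linarith)).ne']
    ring
  have hlog : β * Real.log (x - 1) + Real.log (Real.Gamma x) ≤ Real.log (Real.Gamma (x + β)) := by
    simp only [Function.comp, sub_sub_cancel, div_one, add_sub_cancel_left, hstep] at hslope
    rw [le_div_iff₀ hβ] at hslope
    linarith
  calc (x - 1) ^ β * Real.Gamma x
      = Real.exp (β * Real.log (x - 1) + Real.log (Real.Gamma x)) := by
        rw [Real.exp_add, Real.exp_log (Real.Gamma_pos_of_pos (by linarith)),
          Real.rpow_def_of_pos (by linarith), mul_comm β]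
    _ ≤ Real.Gamma (x + β) := by
        rw [← Real.exp_log (Real.Gamma_pos_of_pos (by linarith : 0 < x + β))]
        exact Real.exp_le_exp.mpr hlog

theorem summable_pow_div_Gamma {β : ℝ} (hβ : 0 < β) (ν r : ℝ) :
    Summable fun n : ℕ => r ^ n / Real.Gamma (β * n + ν) := by
  have hlin : Tendsto (fun n : ℕ => β * n + ν) atTop atTop :=
    tendsto_atTop_add_const_right _ _ (tendsto_natCast_atTop_atTop.const_mul_atTop hβ)
  have hpow : Tendsto (fun n : ℕ => (β * n + ν - 1) ^ β) atTop atTop :=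
    (tendsto_rpow_atTop hβ).comp (tendsto_atTop_add_const_right _ _ hlin)
  refine summable_of_ratio_norm_eventually_le (r := 1 / 2) (by norm_num) ?_
  filter_upwards [hlin.eventually_gt_atTop 1, hpow.eventually_ge_atTop (2 * |r|)] with n hx hr
  set x := β * n + ν
  have hΓx := Real.Gamma_pos_of_pos (by linarith : 0 < x)
  have hΓxβ := Real.Gamma_pos_of_pos (by linarith : 0 < x + β)
  have hxr : 0 < (x - 1) ^ β := Real.rpow_pos_of_pos (by linarith) _
  have hidx : β * ((n + 1 : ℕ) : ℝ) + ν = x + β := by push_cast; ring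
  rw [hidx, norm_div, norm_div, norm_pow, norm_pow, Real.norm_of_nonneg hΓx.le,
    Real.norm_of_nonneg hΓxβ.le, Real.norm_eq_abs, pow_succ]
  calc |r| ^ n * |r| / Real.Gamma (x + β)
      ≤ |r| ^ n * |r| / ((x - 1) ^ β * Real.Gamma x) := by
        gcongr
        exact Real.rpow_mul_Gamma_le_Gamma_add hx hβ
    _ = |r| / (x - 1) ^ β * (|r| ^ n / Real.Gamma x) := by
        field_simp
    _ ≤ 1 / 2 * (|r| ^ n / Real.Gamma x) := by
        refine mul_le_mul_of_nonneg_right ?_ (by positivity)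
        rw [div_le_iff₀ hxr]; linarith

theorem integral_rpow_mul_rpow_sub {p q t : ℝ} (hp : 0 < p) (hq : 0 < q) (ht : 0 < t) :
    ∫ τ in Ioo 0 t, τ ^ (p - 1) * (t - τ) ^ (q - 1) =
      Real.Gamma p * Real.Gamma q / Real.Gamma (p + q) * t ^ (p + q - 1) := by
  have hbeta : Complex.betaIntegral p q = ↑(Real.Gamma p * Real.Gamma q / Real.Gamma (p + q)) := by
    have h := Complex.Gamma_mul_Gamma_eq_betaIntegral (s := p) (t := q) (by simpa) (by simpa)
    rw [← Complex.ofReal_add, Complex.Gamma_ofReal, Complex.Gamma_ofReal, Complex.Gamma_ofReal] at h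
    push_cast
    rw [eq_div_iff (by exact_mod_cast (Real.Gamma_pos_of_pos (add_pos hp hq)).ne'), h, mul_comm]
  apply Complex.ofReal_injective
  rw [← integral_Ioc_eq_integral_Ioo, ← intervalIntegral.integral_of_le ht.le,
    ← intervalIntegral.integral_ofReal]
  calc ∫ τ in (0 : ℝ)..t, ((τ ^ (p - 1) * (t - τ) ^ (q - 1) : ℝ) : ℂ)
      = ∫ τ in (0 : ℝ)..t, (τ : ℂ) ^ ((p : ℂ) - 1) * ((t : ℂ) - τ) ^ ((q : ℂ) - 1) := by
        refine intervalIntegral.integral_congr fun τ hτ => ?_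
        rw [uIcc_of_le ht.le] at hτ
        rw [Complex.ofReal_mul, Complex.ofReal_cpow hτ.1, Complex.ofReal_cpow (by linarith [hτ.2])]
        push_cast; ring
    _ = _ := by
        rw [Complex.betaIntegral_scaled _ _ ht, hbeta, ← Complex.ofReal_one, ← Complex.ofReal_add,
          ← Complex.ofReal_sub, ← Complex.ofReal_cpow ht.le, ← Complex.ofReal_mul, mul_comm]

noncomputable def rlKernel (p t : ℝ) : ℝ := t ^ (p - 1) / Real.Gamma p

section rlKernel

variable {p q t : ℝ}

theorem rlKernel_nonneg (hp : 0 < p) (ht : 0 ≤ t) : 0 ≤ rlKernel p t :=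
  div_nonneg (Real.rpow_nonneg ht _) (Real.Gamma_pos_of_pos hp).le

theorem rlKernel_pos (hp : 0 < p) (ht : 0 < t) : 0 < rlKernel p t :=
  div_pos (Real.rpow_pos_of_pos ht _) (Real.Gamma_pos_of_pos hp)

theorem integral_rlKernel_mul_rlKernel (hp : 0 < p) (hq : 0 < q) (ht : 0 < t) :
    ∫ τ in Ioo 0 t, rlKernel p τ * rlKernel q (t - τ) = rlKernel (p + q) t := by
  have hΓp := Real.Gamma_pos_of_pos hp
  have hΓq := Real.Gamma_pos_of_pos hq
  have hΓpq := Real.Gamma_pos_of_pos (add_pos hp hq)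
  simp only [rlKernel, div_mul_div_comm]
  rw [integral_div, integral_rpow_mul_rpow_sub hp hq ht]
  field_simp

theorem integrableOn_rlKernel_mul_rlKernel (hp : 0 < p) (hq : 0 < q) (ht : 0 < t) :
    IntegrableOn (fun τ => rlKernel p τ * rlKernel q (t - τ)) (Ioo 0 t) :=
  Integrable.of_integral_ne_zero <| by
    rw [integral_rlKernel_mul_rlKernel hp hq ht]
    exact (rlKernel_pos (add_pos hp hq) ht).ne'

theorem rlKernel_le {c τ : ℝ} (hc : 0 < c) (hcp : c ≤ p) (hτ : 0 < τ) (hτt : τ ≤ t) :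
    rlKernel p τ ≤ Real.Gamma c * t ^ (p - c) / Real.Gamma p * rlKernel c τ := by
  have hΓc := Real.Gamma_pos_of_pos hc
  have hΓp := Real.Gamma_pos_of_pos (hc.trans_le hcp)
  have hpow : τ ^ (p - 1) ≤ t ^ (p - c) * τ ^ (c - 1) := by
    rw [show p - 1 = (p - c) + (c - 1) by ring, Real.rpow_add hτ]
    gcongr
  calc τ ^ (p - 1) / Real.Gamma p ≤ t ^ (p - c) * τ ^ (c - 1) / Real.Gamma p := by gcongr
    _ = _ := by unfold rlKernel; field_simp

theorem rlKernel_add_le {c d : ℝ} (hc : 0 < c) (hcp : c ≤ p) (hd : 0 < d) (hdq : d ≤ q)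
    (ht : 0 < t) :
    rlKernel (p + q) t ≤ Real.Gamma c * t ^ (p - c) / Real.Gamma p *
      (Real.Gamma d * t ^ (q - d) / Real.Gamma q) * rlKernel (c + d) t := by
  rw [← integral_rlKernel_mul_rlKernel (hc.trans_le hcp) (hd.trans_le hdq) ht,
    ← integral_rlKernel_mul_rlKernel hc hd ht, ← integral_const_mul]
  refine setIntegral_mono_on (integrableOn_rlKernel_mul_rlKernel (hc.trans_le hcp)
    (hd.trans_le hdq) ht) ((integrableOn_rlKernel_mul_rlKernel hc hd ht).const_mul _)
    measurableSet_Ioo fun τ hτ => ?_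
  have hτ' : 0 < t - τ := by linarith [hτ.2]
  calc rlKernel p τ * rlKernel q (t - τ)
      ≤ (Real.Gamma c * t ^ (p - c) / Real.Gamma p * rlKernel c τ) *
          (Real.Gamma d * t ^ (q - d) / Real.Gamma q * rlKernel d (t - τ)) :=
        mul_le_mul (rlKernel_le hc hcp hτ.1 hτ.2.le) (rlKernel_le hd hdq hτ' (by linarith [hτ.1]))
          (rlKernel_nonneg (hd.trans_le hdq) hτ'.le)
          (mul_nonneg (div_nonneg (mul_nonneg (Real.Gamma_pos_of_pos hc).le
            (Real.rpow_nonneg ht.le _)) (Real.Gamma_pos_of_pos (hc.trans_le hcp)).le)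
            (rlKernel_nonneg hc hτ.1.le))
    _ = _ := by ring

end rlKernel

theorem Real.rpow_mul_natCast_add_sub_one {t : ℝ} (ht : 0 < t) (β ν : ℝ) (n : ℕ) :
    t ^ (β * n + ν - 1) = (t ^ β) ^ n * t ^ (ν - 1) := by
  rw [add_sub_assoc, Real.rpow_add ht, Real.rpow_mul ht.le, Real.rpow_natCast]

theorem summable_pow_mul_rlKernel {β : ℝ} (hβ : 0 < β) (ν r : ℝ) {t : ℝ} (ht : 0 < t) :
    Summable fun n : ℕ => r ^ n * rlKernel (β * n + ν) t := by
  refine ((summable_pow_div_Gamma hβ ν (r * t ^ β)).mul_left (t ^ (ν - 1))).congr fun n => ?_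
  rw [rlKernel, Real.rpow_mul_natCast_add_sub_one ht, mul_pow]
  ring

theorem summable_prod_pow_mul_rlKernel {β₁ β₂ c d r s t : ℝ} (hβ₁ : 0 < β₁) (hβ₂ : 0 < β₂)
    (hc : 0 < c) (hd : 0 < d) (hr : 0 ≤ r) (hs : 0 ≤ s) (ht : 0 < t) :
    Summable fun z : ℕ × ℕ =>
      r ^ z.1 * s ^ z.2 * rlKernel ((β₁ * z.1 + c) + (β₂ * z.2 + d)) t := by
  have hcoeff {β c r : ℝ} (hβ : 0 < β) (hc : 0 < c) (hr : 0 ≤ r) :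
      0 ≤ fun n : ℕ => Real.Gamma c * ((r * t ^ β) ^ n / Real.Gamma (β * n + c)) := fun n =>
    mul_nonneg (Real.Gamma_pos_of_pos hc).le (div_nonneg (by positivity)
      (Real.Gamma_pos_of_pos (by positivity)).le)
  have hF := (summable_pow_div_Gamma hβ₁ c (r * t ^ β₁)).mul_left (Real.Gamma c)
  have hG := (summable_pow_div_Gamma hβ₂ d (s * t ^ β₂)).mul_left (Real.Gamma d)
  have hmajorant := (hF.mul_of_nonneg hG (hcoeff hβ₁ hc hr) (hcoeff hβ₂ hd hs)).mul_right
    (rlKernel (c + d) t)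
  refine hmajorant.of_nonneg_of_le (fun z => mul_nonneg (by positivity)
    (rlKernel_nonneg (by positivity) ht.le)) fun ⟨m, n⟩ => ?_
  have hbound := rlKernel_add_le hc (le_add_of_nonneg_left (by positivity : 0 ≤ β₁ * m))
    hd (le_add_of_nonneg_left (by positivity : 0 ≤ β₂ * n)) ht
  rw [add_sub_cancel_right, add_sub_cancel_right, Real.rpow_mul ht.le, Real.rpow_mul ht.le,
    Real.rpow_natCast, Real.rpow_natCast] at hbound
  calc r ^ m * s ^ n * rlKernel ((β₁ * m + c) + (β₂ * n + d)) t
      ≤ r ^ m * s ^ n * (Real.Gamma c * (t ^ β₁) ^ m / Real.Gamma (β₁ * m + c) *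
          (Real.Gamma d * (t ^ β₂) ^ n / Real.Gamma (β₂ * n + d)) * rlKernel (c + d) t) := by
        gcongr
    _ = _ := by simp only [mul_pow]; ring

theorem Complex.norm_mul_ofReal_of_nonneg (c : ℂ) {x : ℝ} (hx : 0 ≤ x) :
    ‖c * (x : ℂ)‖ = ‖c‖ * x := by
  rw [norm_mul, Complex.norm_of_nonneg hx]

theorem integral_tsum_mul_tsum_rlKernel {ι κ : Type*} [Countable ι] [Countable κ]
    {a : ι → ℂ} {b : κ → ℂ} {p : ι → ℝ} {q : κ → ℝ} (hp : ∀ i, 0 < p i) (hq : ∀ j, 0 < q j)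
    {f g : ℝ → ℂ} {t : ℝ} (ht : 0 < t)
    (hf : ∀ τ ∈ Ioo 0 t, f τ = ∑' i, a i * rlKernel (p i) τ)
    (hg : ∀ τ ∈ Ioo 0 t, g τ = ∑' j, b j * rlKernel (q j) τ)
    (hfs : ∀ τ ∈ Ioo 0 t, Summable fun i => ‖a i‖ * rlKernel (p i) τ)
    (hgs : ∀ τ ∈ Ioo 0 t, Summable fun j => ‖b j‖ * rlKernel (q j) τ)
    (hs : Summable fun z : ι × κ => ‖a z.1‖ * ‖b z.2‖ * rlKernel (p z.1 + q z.2) t) :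
    ∫ τ in (0)..t, f τ * g (t - τ) = ∑' z : ι × κ, a z.1 * b z.2 * rlKernel (p z.1 + q z.2) t := by
  set T : ι × κ → ℝ → ℂ := fun z τ =>
    a z.1 * b z.2 * ((rlKernel (p z.1) τ * rlKernel (q z.2) (t - τ) : ℝ) : ℂ)
  have hT_int (z : ι × κ) : Integrable (T z) (volume.restrict (Ioo 0 t)) :=
    (integrableOn_rlKernel_mul_rlKernel (hp z.1) (hq z.2) ht).ofReal.const_mul _
  have hT_norm (z : ι × κ) :
      ∫ τ in Ioo 0 t, ‖T z τ‖ = ‖a z.1‖ * ‖b z.2‖ * rlKernel (p z.1 + q z.2) t := by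
    rw [← integral_rlKernel_mul_rlKernel (hp z.1) (hq z.2) ht, ← integral_const_mul]
    refine setIntegral_congr_fun measurableSet_Ioo fun τ hτ => ?_
    rw [Complex.norm_mul_ofReal_of_nonneg _ (mul_nonneg (rlKernel_nonneg (hp z.1) hτ.1.le)
      (rlKernel_nonneg (hq z.2) (by linarith [hτ.2]))), norm_mul]
  have hT_sum : ∀ τ ∈ Ioo 0 t, f τ * g (t - τ) = ∑' z, T z τ := fun τ hτ => by
    have hτ' : t - τ ∈ Ioo 0 t := ⟨by linarith [hτ.2], by linarith [hτ.1]⟩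
    rw [hf τ hτ, hg _ hτ', tsum_mul_tsum_of_summable_norm
      ((hfs τ hτ).congr fun i => (Complex.norm_mul_ofReal_of_nonneg _
        (rlKernel_nonneg (hp i) hτ.1.le)).symm)
      ((hgs _ hτ').congr fun j => (Complex.norm_mul_ofReal_of_nonneg _
        (rlKernel_nonneg (hq j) hτ'.1.le)).symm)]
    refine tsum_congr fun z => ?_
    simp only [T]
    push_cast
    ring
  rw [intervalIntegral.integral_of_le ht.le, integral_Ioc_eq_integral_Ioo,
    setIntegral_congr_fun measurableSet_Ioo hT_sum,
    ← integral_tsum_of_summable_integral_norm hT_int (hs.congr fun z => (hT_norm z).symm)]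
  refine tsum_congr fun z => ?_
  rw [integral_const_mul, integral_complex_ofReal,
    integral_rlKernel_mul_rlKernel (hp z.1) (hq z.2) ht]

theorem frInt_eq_integral_mul_rlKernel (γ : ℝ) (f : ℝ → ℂ) (t : ℝ) :
    frInt γ f t = ∫ τ in (0)..t, f τ * rlKernel γ (t - τ) := by
  rw [frInt, ← intervalIntegral.integral_const_mul]
  refine intervalIntegral.integral_congr fun τ _ => ?_
  simp only [rlKernel]
  push_cast
  ring

theorem frInt_tsum_rlKernel {ι : Type*} [Countable ι] {a : ι → ℂ} {p : ι → ℝ}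
    (hp : ∀ i, 0 < p i) {γ t : ℝ} (hγ : 0 < γ) (ht : 0 < t) {f : ℝ → ℂ}
    (hf : ∀ τ ∈ Ioo 0 t, f τ = ∑' i, a i * rlKernel (p i) τ)
    (hfs : ∀ τ ∈ Ioo 0 t, Summable fun i => ‖a i‖ * rlKernel (p i) τ)
    (hs : Summable fun i => ‖a i‖ * rlKernel (p i + γ) t) :
    frInt γ f t = ∑' i, a i * rlKernel (p i + γ) t := by
  have hsingle : ∀ τ ∈ Ioo 0 t, Summable fun _ : Unit => ‖(1 : ℂ)‖ * rlKernel γ τ :=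
    fun _ _ => .of_finite
  rw [frInt_eq_integral_mul_rlKernel, integral_tsum_mul_tsum_rlKernel (b := fun _ : Unit => 1)
    (g := fun τ => (rlKernel γ τ : ℂ))
    hp (fun _ => hγ) ht hf (by simp) hfs hsingle
    (by simpa using ((Equiv.prodPUnit ι).symm.summable_iff
      (f := fun z : ι × Unit => ‖a z.1‖ * rlKernel (p z.1 + γ) t)).mp hs)]
  simpa using ((Equiv.prodPUnit ι).symm.tsum_eq
    fun z : ι × Unit => a z.1 * (rlKernel (p z.1 + γ) t : ℂ)).symm

theorem Summable.tsum_sub_tsum_snd_succ {E : Type*} [NormedAddCommGroup E] [CompleteSpace E]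
    {f : ℕ × ℕ → E} (hf : Summable f) :
    ∑' z, f z - ∑' z : ℕ × ℕ, f (z.1, z.2 + 1) = ∑' m, f (m, 0) := by
  have hshift : Summable fun z : ℕ × ℕ => f (z.1, z.2 + 1) :=
    hf.comp_injective (i := fun z : ℕ × ℕ => (z.1, z.2 + 1)) fun z w h => by
      simpa [Prod.ext_iff] using h
  rw [hf.tsum_prod, hshift.tsum_prod, ← hf.prod.tsum_sub hshift.prod]
  exact tsum_congr fun m => by rw [(hf.prod_factor m).tsum_eq_zero_add, add_sub_cancel_right]

noncomputable def mlKernel (β ν : ℝ) (μ : ℂ) (t : ℝ) : ℂ :=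
  ((t ^ (ν - 1) : ℝ) : ℂ) * ML β ν (μ * ((t ^ β : ℝ) : ℂ))

section mlKernel

variable {β β₁ β₂ ν ν₂ : ℝ}

theorem mlKernel_eq_tsum (μ : ℂ) {t : ℝ} (ht : 0 < t) :
    mlKernel β ν μ t = ∑' n : ℕ, μ ^ n * rlKernel (β * n + ν) t := by
  rw [mlKernel, ML, ← tsum_mul_left]
  refine tsum_congr fun n => ?_
  rw [Complex.Gamma_ofReal, rlKernel, Real.rpow_mul_natCast_add_sub_one ht]
  push_cast
  ring

theorem summable_norm_pow_mul_rlKernel (hβ : 0 < β) (ν : ℝ) (μ : ℂ) {t : ℝ} (ht : 0 < t) :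
    Summable fun n : ℕ => ‖μ ^ n‖ * rlKernel (β * n + ν) t := by
  simpa only [norm_pow] using summable_pow_mul_rlKernel hβ ν ‖μ‖ ht

theorem summable_norm_prod_pow_mul_rlKernel (hβ₁ : 0 < β₁) (hβ₂ : 0 < β₂) (hν : 0 < ν)
    (hν₂ : 0 < ν₂) (μ₁ μ₂ : ℂ) {t : ℝ} (ht : 0 < t) :
    Summable fun z : ℕ × ℕ =>
      ‖μ₁ ^ z.1 * μ₂ ^ z.2‖ * rlKernel ((β₁ * z.1 + ν) + (β₂ * z.2 + ν₂)) t := by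
  simpa only [norm_mul, norm_pow] using
    summable_prod_pow_mul_rlKernel hβ₁ hβ₂ hν hν₂ (norm_nonneg μ₁) (norm_nonneg μ₂) ht

theorem integral_mlKernel_mul_mlKernel (hβ₁ : 0 < β₁) (hβ₂ : 0 < β₂) (hν : 0 < ν)
    (hν₂ : 0 < ν₂) (μ₁ μ₂ : ℂ) {t : ℝ} (ht : 0 < t) :
    ∫ τ in (0)..t, mlKernel β₁ ν μ₁ τ * mlKernel β₂ ν₂ μ₂ (t - τ) =
      ∑' z : ℕ × ℕ, μ₁ ^ z.1 * μ₂ ^ z.2 * rlKernel ((β₁ * z.1 + ν) + (β₂ * z.2 + ν₂)) t :=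
  integral_tsum_mul_tsum_rlKernel (a := fun m => μ₁ ^ m) (b := fun n => μ₂ ^ n)
    (p := fun m : ℕ => β₁ * m + ν) (q := fun n : ℕ => β₂ * n + ν₂)
    (fun _ => by positivity) (fun _ => by positivity) ht
    (fun τ hτ => mlKernel_eq_tsum μ₁ hτ.1) (fun τ hτ => mlKernel_eq_tsum μ₂ hτ.1)
    (fun τ hτ => summable_norm_pow_mul_rlKernel hβ₁ ν μ₁ hτ.1)
    (fun τ hτ => summable_norm_pow_mul_rlKernel hβ₂ ν₂ μ₂ hτ.1)
    (by simpa only [norm_pow] using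
      summable_prod_pow_mul_rlKernel hβ₁ hβ₂ hν hν₂ (norm_nonneg μ₁) (norm_nonneg μ₂) ht)

end mlKernel

section frInt

variable {β β₁ β₂ ν ν₂ γ : ℝ}

theorem frInt_mlKernel (hβ : 0 < β) (hν : 0 < ν) (hγ : 0 < γ) (μ : ℂ) {t : ℝ} (ht : 0 < t) :
    frInt γ (mlKernel β ν μ) t = ∑' n : ℕ, μ ^ n * rlKernel (β * n + ν + γ) t :=
  frInt_tsum_rlKernel (fun _ => by positivity) hγ ht (fun τ hτ => mlKernel_eq_tsum μ hτ.1)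
    (fun τ hτ => summable_norm_pow_mul_rlKernel hβ ν μ hτ.1)
    (by simpa only [add_assoc] using summable_norm_pow_mul_rlKernel hβ (ν + γ) μ ht)

theorem frInt_integral_mlKernel_mul_mlKernel (hβ₁ : 0 < β₁) (hβ₂ : 0 < β₂) (hν : 0 < ν)
    (hν₂ : 0 < ν₂) (hγ : 0 < γ) (μ₁ μ₂ : ℂ) {t : ℝ} (ht : 0 < t) :
    frInt γ (fun x => ∫ τ in (0)..x, mlKernel β₁ ν μ₁ τ * mlKernel β₂ ν₂ μ₂ (x - τ)) t =
      ∑' z : ℕ × ℕ,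
        μ₁ ^ z.1 * μ₂ ^ z.2 * rlKernel ((β₁ * z.1 + ν) + (β₂ * z.2 + ν₂) + γ) t :=
  frInt_tsum_rlKernel (a := fun z : ℕ × ℕ => μ₁ ^ z.1 * μ₂ ^ z.2)
    (p := fun z : ℕ × ℕ => (β₁ * z.1 + ν) + (β₂ * z.2 + ν₂)) (fun _ => by positivity) hγ ht
    (fun x hx => integral_mlKernel_mul_mlKernel hβ₁ hβ₂ hν hν₂ μ₁ μ₂ hx.1)
    (fun x hx => summable_norm_prod_pow_mul_rlKernel hβ₁ hβ₂ hν hν₂ μ₁ μ₂ hx.1)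
    (by simpa only [add_assoc] using
      summable_norm_prod_pow_mul_rlKernel hβ₁ hβ₂ hν (add_pos hν₂ hγ) μ₁ μ₂ ht)

end frInt

theorem lemma_2ii (β₁ β₂ ν : ℝ) (hβ1 : 0 < β₁) (hβ2 : 0 < β₂) (hν : 0 < ν)
    (μ₁ μ₂ : ℂ) (t : ℝ) (ht : 0 ≤ t) :
    (∫ τ in (0:ℝ)..t,
        (((τ ^ (ν - 1) : ℝ) : ℂ) * ML β₁ ν (μ₁ * ((τ ^ β₁ : ℝ) : ℂ))) *
          ((((t - τ) ^ (β₂ - 1) : ℝ) : ℂ) * ML β₂ β₂ (μ₂ * (((t - τ) ^ β₂ : ℝ) : ℂ)))) -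
        μ₂ * frInt β₂
          (fun x : ℝ => ∫ τ in (0:ℝ)..x,
            (((τ ^ (ν - 1) : ℝ) : ℂ) * ML β₁ ν (μ₁ * ((τ ^ β₁ : ℝ) : ℂ))) *
              ((((x - τ) ^ (β₂ - 1) : ℝ) : ℂ) * ML β₂ β₂ (μ₂ * (((x - τ) ^ β₂ : ℝ) : ℂ)))) t
      = frInt β₂
          (fun x : ℝ => ((x ^ (ν - 1) : ℝ) : ℂ) * ML β₁ ν (μ₁ * ((x ^ β₁ : ℝ) : ℂ))) t := by
  change (∫ τ in (0)..t, mlKernel β₁ ν μ₁ τ * mlKernel β₂ β₂ μ₂ (t - τ)) -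
      μ₂ * frInt β₂ (fun x => ∫ τ in (0)..x, mlKernel β₁ ν μ₁ τ * mlKernel β₂ β₂ μ₂ (x - τ)) t =
    frInt β₂ (mlKernel β₁ ν μ₁) t
  rcases ht.eq_or_lt with rfl | ht
  · simp [frInt]
  rw [integral_mlKernel_mul_mlKernel hβ1 hβ2 hν hβ2 μ₁ μ₂ ht,
    frInt_integral_mlKernel_mul_mlKernel hβ1 hβ2 hν hβ2 hβ2 μ₁ μ₂ ht,
    frInt_mlKernel hβ1 hν hβ2 μ₁ ht, ← tsum_mul_left]
  have hshift (z : ℕ × ℕ) :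
      μ₂ * (μ₁ ^ z.1 * μ₂ ^ z.2 * (rlKernel ((β₁ * z.1 + ν) + (β₂ * z.2 + β₂) + β₂) t : ℂ)) =
        μ₁ ^ z.1 * μ₂ ^ (z.2 + 1) *
          (rlKernel ((β₁ * z.1 + ν) + (β₂ * ((z.2 + 1 : ℕ) : ℝ) + β₂)) t : ℂ) := by
    push_cast
    ring_nf
  have hzero (m : ℕ) : μ₁ ^ m * (rlKernel (β₁ * m + ν + β₂) t : ℂ) =
      μ₁ ^ m * μ₂ ^ 0 * (rlKernel ((β₁ * m + ν) + (β₂ * ((0 : ℕ) : ℝ) + β₂)) t : ℂ) := by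
    simp
  simp only [hshift, hzero]
  exact Summable.tsum_sub_tsum_snd_succ
    (f := fun z : ℕ × ℕ =>
      μ₁ ^ z.1 * μ₂ ^ z.2 * (rlKernel ((β₁ * z.1 + ν) + (β₂ * z.2 + β₂)) t : ℂ))
    (.of_norm ((summable_norm_prod_pow_mul_rlKernel hβ1 hβ2 hν hβ2 μ₁ μ₂ ht).congr fun z =>
      (Complex.norm_mul_ofReal_of_nonneg _ (rlKernel_nonneg (by positivity) ht.le)).symm))
end

section
/- Let Z be an m×m complex matrix and β, ν > 0. For real s > ‖Z‖^{1/β}, the matrix s^β I − Z is invertible and Σ_{n=0}^∞ s^{−β(n+1)} Z^n = (s^β I − Z)^{-1}; consequently the entrywise Laplace transform of t ↦ t^{ν−1} E_{β,ν}(t^β Z) (the matrix Mittag-Leffler function Σ_n t^{βn+ν−1} Z^n/Γ(βn+ν)) equals s^{β−ν}(s^β I − Z)^{-1}. -/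
/-!
For `‖Z‖ < s ^ β` the Neumann series `∑ s ^ (-β (n + 1)) • Z ^ n` converges absolutely to
`(s ^ β • 1 - Z)⁻¹`. Termwise, `𝓛[t ^ (a - 1) / Γ(a)](s) = s ^ (-a)`, so the `n`-th term of the
Mittag-Leffler series is sent to `s ^ (-(β n + ν)) • Z ^ n = s ^ (β - ν) • s ^ (-β (n + 1)) • Z ^ n`.
Exchanging sum and integral is legitimate because the sum of the integrals of the absolute values
is the absolutely convergent Neumann series itself. The series under the integral converges for
every `t > 0` since `Γ(y) ≥ e ^ (-A) A ^ (y - 1)` for `y ≥ 1`, which dominates `x ^ n / Γ(β n + ν)`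
by a geometric series.
-/

attribute [local instance] Matrix.linftyOpNormedRing

attribute [local instance] Matrix.linftyOpNormedAlgebra

open MeasureTheory Set Filter
open scoped Ring

section Resolvent

variable {𝕜 A : Type*} [NormedField 𝕜] [NormedRing A] [NormedAlgebra 𝕜 A] {c : 𝕜}

theorem Ring.inverse_smul_of_isUnit (hc : c ≠ 0) {y : A} (hy : IsUnit y) :
    (c • y)⁻¹ʳ = c⁻¹ • y⁻¹ʳ := by
  rw [Algebra.smul_def, Ring.inverse_mul (Or.inr hy), Algebra.smul_def, Algebra.commutes]
  congr 1
  exact Ring.inverse_unit ((Units.mk0 c hc).map (algebraMap 𝕜 A).toMonoidHom)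

variable {x : A}

theorem norm_inv_smul_lt_one (h : ‖x‖ < ‖c‖) : ‖c⁻¹ • x‖ < 1 := by
  rw [norm_smul, norm_inv, inv_mul_lt_one₀ ((norm_nonneg x).trans_lt h)]
  exact h

theorem smul_one_sub_eq_smul_one_sub_inv_smul (hc : c ≠ 0) : c • (1 : A) - x = c • (1 - c⁻¹ • x) := by
  rw [smul_sub, smul_smul, mul_inv_cancel₀ hc, one_smul]

variable [HasSummableGeomSeries A]

theorem isUnit_smul_one_sub_of_norm_lt (h : ‖x‖ < ‖c‖) : IsUnit (c • (1 : A) - x) := by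
  have hc : c ≠ 0 := norm_pos_iff.1 ((norm_nonneg x).trans_lt h)
  rw [smul_one_sub_eq_smul_one_sub_inv_smul hc]
  exact (isUnit_one_sub_of_norm_lt_one (norm_inv_smul_lt_one h)).smul (Units.mk0 c hc)

theorem hasSum_inv_pow_succ_smul_pow (h : ‖x‖ < ‖c‖) :
    HasSum (fun n : ℕ => (c ^ (n + 1))⁻¹ • x ^ n) (c • (1 : A) - x)⁻¹ʳ := by
  have hc : c ≠ 0 := norm_pos_iff.1 ((norm_nonneg x).trans_lt h)
  have ht := norm_inv_smul_lt_one h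
  rw [smul_one_sub_eq_smul_one_sub_inv_smul hc, Ring.inverse_smul_of_isUnit hc (isUnit_one_sub_of_norm_lt_one ht)]
  convert (hasSum_geom_series_inverse _ ht).const_smul c⁻¹ using 2 with n
  rw [smul_pow, smul_smul, inv_pow, ← mul_inv, pow_succ']

end Resolvent

namespace Real

theorem rpow_mul_natCast_add_sub_one_s15 {x : ℝ} (hx : 0 < x) (β ν : ℝ) (n : ℕ) :
    x ^ (β * n + ν - 1) = x ^ (ν - 1) * (x ^ β) ^ n := by
  rw [show β * n + ν - 1 = (ν - 1) + β * n by ring, rpow_add hx, rpow_mul_natCast hx.le]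

theorem exp_neg_mul_rpow_le_Gamma {x A : ℝ} (hx : 1 ≤ x) (hA : 0 < A) :
    exp (-A) * A ^ (x - 1) ≤ Gamma x := by
  have hint : IntegrableOn (fun t => exp (-t) * t ^ (x - 1)) (Ioi 0) :=
    GammaIntegral_convergent (by linarith)
  calc exp (-A) * A ^ (x - 1) = ∫ t in Ioi A, exp (-t) * A ^ (x - 1) := by
        rw [integral_mul_const, integral_exp_neg_Ioi]
    _ ≤ ∫ t in Ioi A, exp (-t) * t ^ (x - 1) := by
        refine setIntegral_mono_on ((integrableOn_exp_neg_Ioi A).mul_const _)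
          (hint.mono_set (Ioi_subset_Ioi hA.le)) measurableSet_Ioi fun t ht => ?_
        gcongr
        exact mem_Ioi.1 ht |>.le
    _ ≤ ∫ t in Ioi 0, exp (-t) * t ^ (x - 1) :=
        setIntegral_mono_set hint
          ((ae_restrict_mem measurableSet_Ioi).mono fun t (ht : 0 < t) => by positivity)
          (Ioi_subset_Ioi hA.le).eventuallyLE
    _ = Gamma x := (Gamma_eq_integral (by linarith)).symm

theorem summable_pow_div_Gamma_mul_add {β : ℝ} (hβ : 0 < β) (ν x : ℝ) :
    Summable fun n : ℕ => x ^ n / Gamma (β * n + ν) := by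
  set A := (|x| + 1) ^ β⁻¹
  have hA : 0 < A := by positivity
  have hAβ : A ^ β = |x| + 1 := by
    rw [← rpow_mul (by positivity), inv_mul_cancel₀ hβ.ne', rpow_one]
  have hq : |x| / (|x| + 1) < 1 := (div_lt_one (by positivity)).2 (lt_add_one _)
  refine .of_norm_bounded_eventually_nat
    ((summable_geometric_of_lt_one (by positivity) hq).mul_left (exp A / A ^ (ν - 1))) ?_
  have hlarge : ∀ᶠ n : ℕ in atTop, 1 ≤ β * n + ν :=
    (tendsto_atTop_add_const_right _ ν
      (tendsto_natCast_atTop_atTop.const_mul_atTop hβ)).eventually_ge_atTop 1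
  filter_upwards [hlarge] with n hn
  calc ‖x ^ n / Gamma (β * n + ν)‖ = |x| ^ n / Gamma (β * n + ν) := by
        rw [norm_div, norm_pow, norm_eq_abs, norm_of_nonneg (Gamma_pos_of_pos (by linarith)).le]
    _ ≤ |x| ^ n / (exp (-A) * A ^ (β * n + ν - 1)) :=
        div_le_div_of_nonneg_left (by positivity) (by positivity)
          (exp_neg_mul_rpow_le_Gamma hn hA)
    _ = exp A / A ^ (ν - 1) * (|x| / (|x| + 1)) ^ n := by
        rw [rpow_mul_natCast_add_sub_one_s15 hA, hAβ, exp_neg, div_pow]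
        field_simp

end Real

theorem summable_rpow_div_Gamma_smul_pow {A : Type*} [NormedRing A] [NormedAlgebra ℂ A]
    [CompleteSpace A] {β : ℝ} (hβ : 0 < β) (ν : ℝ) {t : ℝ} (ht : 0 < t) (Z : A) :
    Summable fun n : ℕ =>
      (((t ^ (β * n + ν - 1) : ℝ) : ℂ) / Complex.Gamma ((β * n + ν : ℝ) : ℂ)) • Z ^ n := by
  refine .of_norm_bounded_eventually_nat
    ((Real.summable_pow_div_Gamma_mul_add hβ ν (t ^ β * ‖Z‖)).abs.mul_left (t ^ (ν - 1))) ?_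
  filter_upwards [eventually_ge_atTop 1] with n hn
  calc _ = t ^ (ν - 1) * (t ^ β) ^ n / |Real.Gamma (β * n + ν)| * ‖Z ^ n‖ := by
        rw [norm_smul, Complex.Gamma_ofReal, ← Complex.ofReal_div, Complex.norm_real,
          Real.norm_eq_abs, abs_div, abs_of_pos (Real.rpow_pos_of_pos ht _),
          Real.rpow_mul_natCast_add_sub_one_s15 ht]
    _ ≤ t ^ (ν - 1) * (t ^ β) ^ n / |Real.Gamma (β * n + ν)| * ‖Z‖ ^ n := by
        gcongr
        exact norm_pow_le' Z hn
    _ = t ^ (ν - 1) * |(t ^ β * ‖Z‖) ^ n / Real.Gamma (β * n + ν)| := by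
        rw [abs_div, mul_pow, abs_of_nonneg (by positivity : (0 : ℝ) ≤ (t ^ β) ^ n * ‖Z‖ ^ n)]
        ring

theorem laplace_congr {f g : ℝ → ℂ} (h : EqOn f g (Ioi 0)) (s : ℝ) :
    laplace f s = laplace g s :=
  setIntegral_congr_fun measurableSet_Ioi fun t ht => by rw [h ht]

theorem laplace_tsum {f : ℕ → ℝ → ℂ} {s : ℝ}
    (hf : ∀ n, IntegrableOn (fun t : ℝ => Complex.exp (-(s * t)) * f n t) (Ioi 0))
    (hsum : Summable fun n => ∫ t in Ioi (0 : ℝ), ‖Complex.exp (-(s * t)) * f n t‖) :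
    laplace (fun t => ∑' n, f n t) s = ∑' n, laplace (f n) s := by
  simp only [laplace, ← tsum_mul_left]
  exact (integral_tsum_of_summable_integral_norm hf hsum).symm

section PowerKernel

variable {a s : ℝ}

theorem integrableOn_exp_neg_mul_mul_rpow (ha : 0 < a) (hs : 0 < s) :
    IntegrableOn (fun t => Real.exp (-(s * t)) * t ^ (a - 1)) (Ioi 0) := by
  refine (integrableOn_rpow_mul_exp_neg_mul_rpow (s := a - 1) (by linarith) one_pos hs).congr_fun
    (fun t _ => ?_) measurableSet_Ioi
  beta_reduce
  rw [Real.rpow_one, neg_mul, mul_comm]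

theorem integral_exp_neg_mul_mul_rpow (ha : 0 < a) (hs : 0 < s) :
    ∫ t in Ioi 0, Real.exp (-(s * t)) * t ^ (a - 1) = Real.Gamma a * s ^ (-a) := by
  simp_rw [mul_comm (Real.exp _)]
  rw [Real.integral_rpow_mul_exp_neg_mul_Ioi ha hs, one_div, Real.inv_rpow hs.le,
    Real.rpow_neg hs.le, mul_comm]

theorem exp_neg_mul_mul_rpow_div_Gamma (t : ℝ) (z : ℂ) :
    Complex.exp (-(s * t)) * (((t ^ (a - 1) : ℝ) : ℂ) / Complex.Gamma (a : ℂ) * z)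
      = ((Real.exp (-(s * t)) * t ^ (a - 1) / Real.Gamma a : ℝ) : ℂ) * z := by
  push_cast [Complex.Gamma_ofReal]
  ring

end PowerKernel

theorem laplace_tsum_rpow_div_Gamma_mul {a : ℕ → ℝ} {z : ℕ → ℂ} {s : ℝ} (ha : ∀ n, 0 < a n)
    (hs : 0 < s) (hz : Summable fun n => ((s ^ (-a n) : ℝ) : ℂ) * z n) :
    laplace (fun t => ∑' n, ((t ^ (a n - 1) : ℝ) : ℂ) / Complex.Gamma (a n : ℂ) * z n) s
      = ∑' n, ((s ^ (-a n) : ℝ) : ℂ) * z n := by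
  set k : ℕ → ℝ → ℝ := fun n t => Real.exp (-(s * t)) * t ^ (a n - 1) / Real.Gamma (a n)
  have hk_int : ∀ n, IntegrableOn (k n) (Ioi 0) :=
    fun n => (integrableOn_exp_neg_mul_mul_rpow (ha n) hs).div_const _
  have hk : ∀ n, ∫ t in Ioi 0, k n t = s ^ (-a n) := fun n => by
    rw [integral_div, integral_exp_neg_mul_mul_rpow (ha n) hs,
      mul_div_cancel_left₀ _ (Real.Gamma_pos_of_pos (ha n)).ne']
  have hk_nonneg : ∀ n, ∀ t ∈ Ioi (0 : ℝ), 0 ≤ k n t := fun n t (ht : 0 < t) =>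
    div_nonneg (by positivity) (Real.Gamma_pos_of_pos (ha n)).le
  rw [laplace_tsum]
  · refine tsum_congr fun n => ?_
    simp_rw [laplace, exp_neg_mul_mul_rpow_div_Gamma]
    rw [integral_mul_const, integral_complex_ofReal, hk]
  · intro n
    simp_rw [exp_neg_mul_mul_rpow_div_Gamma]
    exact (hk_int n).ofReal.mul_const _
  · refine (summable_norm_iff.2 hz).congr fun n => ?_
    simp_rw [exp_neg_mul_mul_rpow_div_Gamma]
    rw [setIntegral_congr_fun measurableSet_Ioi fun t ht => by
        rw [norm_mul, Complex.norm_real, Real.norm_of_nonneg (hk_nonneg n t ht)],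
      integral_mul_const, hk, norm_mul, Complex.norm_real, Real.norm_of_nonneg (by positivity)]

theorem matrix_ML_laplace (m : ℕ) (β ν : ℝ) (hβ : 0 < β) (hν : 0 < ν)
    (Z : Matrix (Fin m) (Fin m) ℂ) (s : ℝ) (hs0 : 0 < s) (hs : ‖Z‖ ^ (1 / β) < s) :
    IsUnit (((s ^ β : ℝ) : ℂ) • (1 : Matrix (Fin m) (Fin m) ℂ) - Z) ∧
      (∑' n : ℕ, (((s ^ (β * ((n : ℝ) + 1)) : ℝ) : ℂ))⁻¹ • Z ^ n)
        = (((s ^ β : ℝ) : ℂ) • (1 : Matrix (Fin m) (Fin m) ℂ) - Z)⁻¹ ∧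
      ∀ i j : Fin m,
        laplace (fun t : ℝ =>
            (∑' n : ℕ,
              (((t ^ (β * n + ν - 1) : ℝ) : ℂ) / Complex.Gamma ((β * n + ν : ℝ) : ℂ)) • Z ^ n)
              i j) s
          = (((s ^ (β - ν) : ℝ) : ℂ) •
              (((s ^ β : ℝ) : ℂ) • (1 : Matrix (Fin m) (Fin m) ℂ) - Z)⁻¹) i j := by
  set c : ℂ := ((s ^ β : ℝ) : ℂ)
  have hZ : ‖Z‖ < ‖c‖ := by
    rwa [Complex.norm_real, Real.norm_of_nonneg (by positivity),
      ← Real.rpow_inv_lt_iff_of_pos (norm_nonneg Z) hs0.le hβ, ← one_div]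
  have hres : HasSum (fun n : ℕ => (((s ^ (β * ((n : ℝ) + 1)) : ℝ) : ℂ))⁻¹ • Z ^ n)
      (c • 1 - Z)⁻¹ := by
    have hpow : ∀ n : ℕ, s ^ (β * ((n : ℝ) + 1)) = (s ^ β) ^ (n + 1) := fun n => by
      rw [← Nat.cast_add_one, Real.rpow_mul_natCast hs0.le]
    simp_rw [hpow, Complex.ofReal_pow, Matrix.nonsing_inv_eq_ringInverse]
    exact hasSum_inv_pow_succ_smul_pow hZ
  refine ⟨isUnit_smul_one_sub_of_norm_lt hZ, hres.tsum_eq, fun i j => ?_⟩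
  have hcoeff : HasSum (fun n : ℕ => ((s ^ (-(β * n + ν)) : ℝ) : ℂ) * (Z ^ n) i j)
      ((((s ^ (β - ν) : ℝ) : ℂ) • (c • 1 - Z)⁻¹) i j) := by
    convert Pi.hasSum.1 (Pi.hasSum.1 (hres.const_smul ((s ^ (β - ν) : ℝ) : ℂ)) i) j using 2 with n
    rw [Matrix.smul_apply, Matrix.smul_apply, smul_eq_mul, smul_eq_mul, ← mul_assoc,
      ← Complex.ofReal_inv, ← Complex.ofReal_mul, ← Real.rpow_neg hs0.le, ← Real.rpow_add hs0]
    ring_nf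
  have hentry : EqOn
      (fun t : ℝ => (∑' n : ℕ, (((t ^ (β * n + ν - 1) : ℝ) : ℂ) /
        Complex.Gamma ((β * n + ν : ℝ) : ℂ)) • Z ^ n) i j)
      (fun t => ∑' n : ℕ, ((t ^ (β * n + ν - 1) : ℝ) : ℂ) /
        Complex.Gamma ((β * n + ν : ℝ) : ℂ) * (Z ^ n) i j) (Ioi 0) := fun t ht =>
    (Pi.hasSum.1 (Pi.hasSum.1 (summable_rpow_div_Gamma_smul_pow hβ ν ht Z).hasSum i) j).tsum_eq.symm
  rw [laplace_congr hentry, laplace_tsum_rpow_div_Gamma_mul (a := fun n => β * n + ν)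
    (fun n => by positivity) hs0 hcoeff.summable, hcoeff.tsum_eq]
end
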